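/- Let ρ be a sub-normalized state, σ a positive definite matrix, M a positive semidefinite matrix with tr(Mσ) ≤ 1, α > 1 and ε ∈ (0,1). Then there exists an orthogonal projector Π (Π Hermitian with Π² = Π) such that tr(Πρ) ≤ ε² and tr(M·(1−Π)ρ(1−Π)) ≤ 2^{D̃_α(ρ‖σ)} · ε^{−2/(α−1)}. -/

import Mathlib

open scoped Classical ComplexOrder Kronecker
open Matrix

noncomputable section

variable {n : Type*} [Fintype n] [DecidableEq n]

/-- Real part of the trace. -/
def rtr (A : Matrix n n ℂ) : ℝ := (A.trace).re

/-- Löwner order: `loewnerLE A B` iff `B - A` is positive semidefinite. -/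
def loewnerLE (A B : Matrix n n ℂ) : Prop := (B - A).PosSemidef

/-- Positive semidefinite square root of a PSD matrix (junk value `0` otherwise). -/
def msqrt (A : Matrix n n ℂ) : Matrix n n ℂ :=
  if h : A.PosSemidef then (h.1.eigenvectorUnitary : Matrix n n ℂ) *
    diagonal (((↑) : ℝ → ℂ) ∘ (Real.sqrt ∘ h.1.eigenvalues)) *
    (star (h.1.eigenvectorUnitary : Matrix n n ℂ)) else 0

/-- Trace norm `‖A‖₁ = tr √(Aᴴ A)`. -/
def traceNorm (A : Matrix n n ℂ) : ℝ :=
  rtr (((Matrix.posSemidef_conjTranspose_mul_self A).1.eigenvectorUnitary : Matrix n n ℂ) *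
    diagonal (((↑) : ℝ → ℂ) ∘ (Real.sqrt ∘ (Matrix.posSemidef_conjTranspose_mul_self A).1.eigenvalues)) *
    (star ((Matrix.posSemidef_conjTranspose_mul_self A).1.eigenvectorUnitary : Matrix n n ℂ)))

/-- Generalized fidelity for sub-normalized states. -/
def genFid (ρ σ : Matrix n n ℂ) : ℝ :=
  (traceNorm (msqrt ρ * msqrt σ) + Real.sqrt ((1 - rtr ρ) * (1 - rtr σ))) ^ 2

/-- Purified distance. -/
def purDist (ρ σ : Matrix n n ℂ) : ℝ := Real.sqrt (1 - genFid ρ σ)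

/-- Trace distance. -/
def traceDist (ρ σ : Matrix n n ℂ) : ℝ := traceNorm (ρ - σ) / 2

/-- Max-divergence `D_max(ρ‖σ) = inf {λ : ρ ≤ 2^λ σ}` (Löwner order). -/
def Dmax (ρ σ : Matrix n n ℂ) : ℝ :=
  sInf {lam : ℝ | loewnerLE ρ (((2 : ℝ) ^ lam) • σ)}

/-- Smoothed max-divergence with purified-distance smoothing over sub-normalized states. -/
def DmaxSmoothP (ε : ℝ) (ρ σ : Matrix n n ℂ) : ℝ :=
  sInf {d : ℝ | ∃ ρ' : Matrix n n ℂ,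
    ρ'.PosSemidef ∧ rtr ρ' ≤ 1 ∧ purDist ρ ρ' ≤ ε ∧ d = Dmax ρ' σ}

/-- Hypothesis testing divergence
`D_h^ε(ρ‖σ) = -log sup {tr (Λ σ) : 0 ≤ Λ ≤ 1, tr (Λ ρ) ≥ 1 - ε}`. -/
def Dh (ε : ℝ) (ρ σ : Matrix n n ℂ) : ℝ :=
  - Real.logb 2 (sSup {x : ℝ | ∃ L : Matrix n n ℂ,
      L.PosSemidef ∧ loewnerLE L 1 ∧ 1 - ε ≤ rtr (L * ρ) ∧ x = rtr (L * σ)})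

/-- Real power of a Hermitian matrix, defined spectrally (junk value `0` if not Hermitian). -/
def hpow (A : Matrix n n ℂ) (t : ℝ) : Matrix n n ℂ :=
  if h : A.IsHermitian then
    (h.eigenvectorUnitary : Matrix n n ℂ) *
      Matrix.diagonal (fun i => ((h.eigenvalues i ^ t : ℝ) : ℂ)) *
      (star (h.eigenvectorUnitary : Matrix n n ℂ))
  else 0

/-- Sandwiched Rényi divergence of order `α`. -/
def sandwichedRenyi (α : ℝ) (ρ σ : Matrix n n ℂ) : ℝ :=
  (1 / (α - 1)) * Real.logb 2
    (rtr (hpow (hpow σ ((1 - α) / (2 * α)) * ρ * hpow σ ((1 - α) / (2 * α))) α) / rtr ρ)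

/-- Marginal (partial trace) on the first factor. -/
def margA {A B : Type*} [Fintype A] [Fintype B] (ρ : Matrix (A × B) (A × B) ℂ) :
    Matrix A A ℂ :=
  Matrix.of fun a a' => ∑ b : B, ρ (a, b) (a', b)

/-- Marginal (partial trace) on the second factor. -/
def margB {A B : Type*} [Fintype A] [Fintype B] (ρ : Matrix (A × B) (A × B) ℂ) :
    Matrix B B ℂ :=
  Matrix.of fun b b' => ∑ a : A, ρ (a, b) (a, b')

end

/-!
Let `Π` be the spectral projector of `M` onto its eigenvalues `> μ`. Everything rests on the
estimate `tr (A ρ)^α ≤ Q̃_α(ρ‖σ) μ tr (A σ)^(α-1)` for `0 ≤ A ≤ μ`, where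
`Q̃_α(ρ‖σ) = tr X^α`, `X = σ^(-b) ρ σ^(-b)`, `b = (α-1)/2α`. Write `tr (A ρ) = tr (Z X)` with
`Z = σ^b A σ^b`; Hölder's inequality (in the doubly stochastic form coming from the two
eigenbases) gives `tr (Z X) ≤ (tr Z^β)^(1/β) (tr X^α)^(1/α)` with `β = α/(α-1)`. The matrix `Z`
has the spectrum of `√A σ^(2b) √A`, and Jensen's inequality in an eigenbasis of `σ`, together
with `(σ^(2b))^β = σ` and `‖√A‖² ≤ μ`, bounds `tr Z^β` by `μ^(β-1) tr (A σ)`.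
Apply it to `A = Π` (for which `μ Π ≤ M`, so `tr (Π σ) ≤ 1/μ`) and to `A = (1-Π) M (1-Π)`,
which lies below both `μ` and `M`; the choice `μ = 2^D̃_α(ρ‖σ) ε^(-2α/(α-1))` yields both bounds.
-/

open scoped MatrixOrder
open Complex (normSq)

section
variable {n : Type*} [Fintype n]

lemma rtr_sub (A B : Matrix n n ℂ) : rtr (A - B) = rtr A - rtr B := by
  simp [rtr, trace_sub]

lemma rtr_mul_comm (A B : Matrix n n ℂ) : rtr (A * B) = rtr (B * A) := by
  rw [rtr, trace_mul_comm, rtr]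

lemma rtr_smul (r : ℝ) (A : Matrix n n ℂ) : rtr (r • A) = r * rtr A := by
  simp [rtr, trace_smul]

lemma Matrix.PosSemidef.rtr_nonneg {A : Matrix n n ℂ} (hA : A.PosSemidef) : 0 ≤ rtr A :=
  (Complex.nonneg_iff.mp hA.trace_nonneg).1

variable [DecidableEq n]

lemma rtr_diagonal_mul (d : n → ℝ) (A : Matrix n n ℂ) :
    rtr (diagonal (fun k => (d k : ℂ)) * A) = ∑ k, d k * (A k k).re := by
  simp [rtr, trace, diagonal_mul, Complex.re_sum]

lemma rtr_mul_nonneg {A B : Matrix n n ℂ} (hA : A.PosSemidef) (hB : B.PosSemidef) :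
    0 ≤ rtr (A * B) := by
  set S := CFC.sqrt A
  have hSS : Sᴴ * S = A := by
    rw [(CFC.sqrt_nonneg A).posSemidef.isHermitian.eq]
    exact CFC.sqrt_mul_sqrt_self A hA.nonneg
  rw [← hSS, mul_assoc, rtr_mul_comm]
  exact (hB.mul_mul_conjTranspose_same S).rtr_nonneg

lemma rtr_mul_le_rtr_mul {A B σ : Matrix n n ℂ} (hAB : A ≤ B) (hσ : σ.PosSemidef) :
    rtr (A * σ) ≤ rtr (B * σ) := by
  have := rtr_mul_nonneg (le_iff.mp hAB) hσ
  rwa [sub_mul, rtr_sub, sub_nonneg] at this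

namespace Matrix
variable {A : Matrix n n ℂ}

lemma continuousOn_spectrum (f : ℝ → ℝ) (A : Matrix n n ℂ) : ContinuousOn f (spectrum ℝ A) :=
  A.finite_real_spectrum.continuousOn f

lemma IsHermitian.cfc_eq_mul_diagonal_mul (hA : A.IsHermitian) (f : ℝ → ℝ) :
    cfc f A = (hA.eigenvectorUnitary : Matrix n n ℂ) *
      diagonal (fun i => ((f (hA.eigenvalues i) : ℝ) : ℂ)) *
      star (hA.eigenvectorUnitary : Matrix n n ℂ) := by
  rw [hA.cfc_eq, IsHermitian.cfc, Unitary.conjStarAlgAut_apply]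
  rfl

lemma PosDef.pos_of_mem_spectrum (hA : A.PosDef) {x : ℝ} (hx : x ∈ spectrum ℝ A) : 0 < x := by
  obtain ⟨i, rfl⟩ := hA.isHermitian.spectrum_real_eq_range_eigenvalues ▸ hx
  exact hA.eigenvalues_pos i

lemma PosSemidef.nonneg_of_mem_spectrum (hA : A.PosSemidef) {x : ℝ} (hx : x ∈ spectrum ℝ A) :
    0 ≤ x :=
  spectrum_nonneg_of_nonneg hA.nonneg hx

end Matrix

section hpow
variable {A : Matrix n n ℂ}

lemma hpow_eq_cfc (hA : A.IsHermitian) (t : ℝ) : hpow A t = cfc (fun x : ℝ => x ^ t) A := by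
  rw [hA.cfc_eq_mul_diagonal_mul, hpow, dif_pos hA]

lemma rtr_hpow (hA : A.IsHermitian) (t : ℝ) : rtr (hpow A t) = ∑ i, hA.eigenvalues i ^ t := by
  rw [hpow, dif_pos hA, rtr, trace_mul_cycle, Unitary.coe_star_mul_self, one_mul, trace_diagonal]
  simp [← Complex.ofReal_sum]

lemma posSemidef_hpow (hA : A.PosSemidef) (t : ℝ) : (hpow A t).PosSemidef := by
  rw [hpow_eq_cfc hA.isHermitian, ← nonneg_iff_posSemidef]
  exact cfc_nonneg fun x hx => Real.rpow_nonneg (hA.nonneg_of_mem_spectrum hx) t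

lemma hpow_one (hA : A.IsHermitian) : hpow A 1 = A := by
  simp only [hpow_eq_cfc hA, Real.rpow_one]
  exact cfc_id' ℝ A

lemma hpow_zero (hA : A.IsHermitian) : hpow A 0 = 1 := by
  simp only [hpow_eq_cfc hA, Real.rpow_zero]
  exact cfc_const_one ℝ A

lemma hpow_mul_hpow (hA : A.PosDef) (s t : ℝ) : hpow A s * hpow A t = hpow A (s + t) := by
  simp only [hpow_eq_cfc hA.isHermitian]
  rw [← cfc_mul _ _ A (continuousOn_spectrum _ A) (continuousOn_spectrum _ A)]
  exact cfc_congr fun x hx => (Real.rpow_add (hA.pos_of_mem_spectrum hx) s t).symm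

lemma hpow_hpow (hA : A.PosSemidef) (s t : ℝ) : hpow (hpow A s) t = hpow A (s * t) := by
  rw [hpow_eq_cfc (posSemidef_hpow hA s).isHermitian, hpow_eq_cfc hA.isHermitian,
    hpow_eq_cfc hA.isHermitian, ← cfc_comp' (fun x : ℝ => x ^ t) (fun x : ℝ => x ^ s) A
      ((A.finite_real_spectrum.image _).continuousOn _) (continuousOn_spectrum _ A)]
  exact cfc_congr fun x hx => (Real.rpow_mul (hA.nonneg_of_mem_spectrum hx) s t).symm

lemma posSemidef_hpow_mul_mul_hpow {ρ σ : Matrix n n ℂ} (hρ : ρ.PosSemidef) (hσ : σ.PosSemidef)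
    (t : ℝ) : (hpow σ t * ρ * hpow σ t).PosSemidef := by
  have h := hρ.mul_mul_conjTranspose_same (hpow σ t)
  rwa [(posSemidef_hpow hσ t).isHermitian.eq] at h

lemma hpow_neg_mul_mul_hpow_neg {σ : Matrix n n ℂ} (hσ : σ.PosDef) (ρ : Matrix n n ℂ) (t : ℝ) :
    hpow σ (-t) * (hpow σ t * ρ * hpow σ t) * hpow σ (-t) = ρ := by
  simp only [← mul_assoc, hpow_mul_hpow hσ, neg_add_cancel, hpow_zero hσ.isHermitian, one_mul]
  rw [mul_assoc, hpow_mul_hpow hσ, add_neg_cancel, hpow_zero hσ.isHermitian, mul_one]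

lemma rtr_hpow_mul_conjTranspose_self (Y : Matrix n n ℂ) (t : ℝ) :
    rtr (hpow (Y * Yᴴ) t) = rtr (hpow (Yᴴ * Y) t) := by
  rw [rtr_hpow (isHermitian_mul_conjTranspose_self Y),
    rtr_hpow (isHermitian_conjTranspose_mul_self Y),
    ((isHermitian_mul_conjTranspose_self Y).eigenvalues_eq_eigenvalues_iff
      (isHermitian_conjTranspose_mul_self Y)).mpr (charpoly_mul_comm _ _)]

end hpow

section jensen

lemma re_conjTranspose_mul_cfc_mul_apply {H : Matrix n n ℂ} (hH : H.IsHermitian) (f : ℝ → ℝ)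
    (G : Matrix n n ℂ) (k : n) :
    ((Gᴴ * cfc f H * G) k k).re =
      ∑ i, normSq ((star (hH.eigenvectorUnitary : Matrix n n ℂ) * G) i k) *
        f (hH.eigenvalues i) := by
  set Q := star (hH.eigenvectorUnitary : Matrix n n ℂ) * G
  have hQ : Gᴴ * cfc f H * G = Qᴴ * diagonal (fun i => ((f (hH.eigenvalues i) : ℝ) : ℂ)) * Q := by
    simp only [Q, hH.cfc_eq_mul_diagonal_mul, ← star_eq_conjTranspose, star_mul, star_star,
      mul_assoc]
  rw [hQ, mul_apply, Complex.re_sum]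
  refine Finset.sum_congr rfl fun i _ => ?_
  simp only [mul_diagonal, conjTranspose_apply, RCLike.star_def, Complex.mul_re, Complex.conj_re,
    Complex.ofReal_re, Complex.conj_im, Complex.ofReal_im, mul_zero, sub_zero, Complex.mul_im,
    neg_mul, zero_add, sub_neg_eq_add, Complex.normSq_apply]
  ring

lemma re_conjTranspose_mul_mul_apply {H : Matrix n n ℂ} (hH : H.IsHermitian)
    (G : Matrix n n ℂ) (k : n) :
    ((Gᴴ * H * G) k k).re =
      ∑ i, normSq ((star (hH.eigenvectorUnitary : Matrix n n ℂ) * G) i k) * hH.eigenvalues i := by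
  have h := re_conjTranspose_mul_cfc_mul_apply hH (fun x => x) G k
  rwa [cfc_id' ℝ H] at h

lemma Matrix.IsHermitian.eigenvalues_eq_re_apply {T : Matrix n n ℂ} (hT : T.IsHermitian) (k : n) :
    hT.eigenvalues k = (((hT.eigenvectorUnitary : Matrix n n ℂ)ᴴ * T *
      hT.eigenvectorUnitary) k k).re := by
  rw [re_conjTranspose_mul_mul_apply hT, Unitary.coe_star_mul_self]
  simp [one_apply]

/-- Jensen's inequality for the weights `|(U^* G)_{ik}|²`, `U` an eigenbasis of `H`. -/
lemma re_conjTranspose_mul_mul_apply_rpow_le {H : Matrix n n ℂ} (hH : H.PosSemidef)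
    (G : Matrix n n ℂ) (k : n) {p : ℝ} (hp : 1 ≤ p) :
    ((Gᴴ * H * G) k k).re ^ p ≤ ((Gᴴ * G) k k).re ^ (p - 1) * ((Gᴴ * hpow H p * G) k k).re := by
  have hG : Gᴴ * G = Gᴴ * cfc (fun _ => (1 : ℝ)) H * G := by rw [cfc_const_one ℝ H, mul_one]
  rw [hG, hpow_eq_cfc hH.isHermitian]
  simp only [re_conjTranspose_mul_cfc_mul_apply hH.isHermitian,
    re_conjTranspose_mul_mul_apply hH.isHermitian, mul_one]
  set w := fun i => normSq ((star (hH.isHermitian.eigenvectorUnitary : Matrix n n ℂ) * G) i k)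
  set x := hH.isHermitian.eigenvalues
  have hw : ∀ i, 0 ≤ w i := fun i => Complex.normSq_nonneg _
  have hx : ∀ i, 0 ≤ x i := hH.eigenvalues_nonneg
  have hW : 0 ≤ ∑ i, w i := Finset.sum_nonneg fun i _ => hw i
  have hWx : 0 ≤ ∑ i, w i * x i ^ p :=
    Finset.sum_nonneg fun i _ => mul_nonneg (hw i) (Real.rpow_nonneg (hx i) p)
  have hp0 : 0 < p := by linarith
  calc (∑ i, w i * x i) ^ p
      ≤ ((∑ i, w i) ^ (1 - p⁻¹) * (∑ i, w i * x i ^ p) ^ p⁻¹) ^ p :=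
        Real.rpow_le_rpow (Finset.sum_nonneg fun i _ => mul_nonneg (hw i) (hx i))
          (Real.inner_le_weight_mul_Lp_of_nonneg Finset.univ hp w x hw hx) hp0.le
    _ = (∑ i, w i) ^ (p - 1) * ∑ i, w i * x i ^ p := by
        rw [Real.mul_rpow (Real.rpow_nonneg hW _) (Real.rpow_nonneg hWx _), ← Real.rpow_mul hW,
          ← Real.rpow_mul hWx, inv_mul_cancel₀ hp0.ne', Real.rpow_one, sub_mul, one_mul,
          inv_mul_cancel₀ hp0.ne']

theorem rtr_hpow_conjTranspose_mul_mul_le {H G : Matrix n n ℂ} (hH : H.PosSemidef) {μ : ℝ}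
    (hG : Gᴴ * G ≤ μ • 1) {p : ℝ} (hp : 1 ≤ p) :
    rtr (hpow (Gᴴ * H * G) p) ≤ μ ^ (p - 1) * rtr (Gᴴ * hpow H p * G) := by
  set hT := (hH.conjTranspose_mul_mul_same G).isHermitian
  rw [rtr_hpow hT]
  set W : Matrix n n ℂ := (hT.eigenvectorUnitary : Matrix n n ℂ)
  have hWW : Wᴴ * W = 1 := Unitary.coe_star_mul_self _
  have hWW' : W * Wᴴ = 1 := Unitary.coe_mul_star_self _
  have hGW : ∀ k, (((G * W)ᴴ * (G * W)) k k).re ≤ μ := by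
    intro k
    have h := (le_iff.mp hG).conjTranspose_mul_mul_same W
    have hconj : Wᴴ * (μ • 1 - Gᴴ * G) * W = μ • 1 - (G * W)ᴴ * (G * W) := by
      rw [mul_sub, sub_mul, mul_smul_comm, mul_one, smul_mul_assoc, hWW, conjTranspose_mul]
      simp only [mul_assoc]
    rw [hconj] at h
    simpa using (Complex.nonneg_iff.mp (h.diag_nonneg (i := k))).1
  have hk : ∀ k, hT.eigenvalues k ^ p ≤
      μ ^ (p - 1) * (((G * W)ᴴ * hpow H p * (G * W)) k k).re := by
    intro k
    have heig : hT.eigenvalues k = (((G * W)ᴴ * H * (G * W)) k k).re := by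
      rw [hT.eigenvalues_eq_re_apply, conjTranspose_mul]
      simp only [W, mul_assoc]
    rw [heig]
    refine (re_conjTranspose_mul_mul_apply_rpow_le hH (G * W) k hp).trans ?_
    have hb := ((posSemidef_hpow hH p).conjTranspose_mul_mul_same (G * W)).diag_nonneg (i := k)
    have ha := (posSemidef_conjTranspose_mul_self (G * W)).diag_nonneg (i := k)
    exact mul_le_mul_of_nonneg_right
      (Real.rpow_le_rpow (Complex.nonneg_iff.mp ha).1 (hGW k) (by linarith))
      (Complex.nonneg_iff.mp hb).1
  calc _ ≤ ∑ k, μ ^ (p - 1) * (((G * W)ᴴ * hpow H p * (G * W)) k k).re :=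
        Finset.sum_le_sum fun k _ => hk k
    _ = μ ^ (p - 1) * rtr ((G * W)ᴴ * hpow H p * (G * W)) := by
        rw [← Finset.mul_sum, rtr, trace, Complex.re_sum]
        rfl
    _ = μ ^ (p - 1) * rtr (Gᴴ * hpow H p * G) := by
        rw [conjTranspose_mul, rtr, rtr, show Wᴴ * Gᴴ * hpow H p * (G * W) =
          Wᴴ * (Gᴴ * hpow H p * G) * W by simp only [mul_assoc], trace_mul_cycle, hWW', one_mul]

end jensen

section holder

lemma normSq_mem_doublyStochastic {Q : Matrix n n ℂ} (hQ : Q ∈ unitary (Matrix n n ℂ)) :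
    (of fun i j => normSq (Q i j)) ∈ doublyStochastic ℝ n := by
  rw [mem_doublyStochastic_iff_sum]
  refine ⟨fun i j => Complex.normSq_nonneg _, fun i => ?_, fun j => ?_⟩
  · have h : (Q * star Q) i i = ((∑ j, normSq (Q i j) : ℝ) : ℂ) := by
      simp [mul_apply, Complex.mul_conj]
    rw [Unitary.mul_star_self_of_mem hQ, one_apply_eq] at h
    exact_mod_cast h.symm
  · have h : (star Q * Q) j j = ((∑ i, normSq (Q i j) : ℝ) : ℂ) := by
      simp [mul_apply, Complex.conj_mul', Complex.normSq_eq_norm_sq]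
    rw [Unitary.star_mul_self_of_mem hQ, one_apply_eq] at h
    exact_mod_cast h.symm

lemma sum_mul_mul_le_of_mem_doublyStochastic {c : Matrix n n ℝ} (hc : c ∈ doublyStochastic ℝ n)
    {a b : n → ℝ} (ha : ∀ i, 0 ≤ a i) (hb : ∀ j, 0 ≤ b j) {p q : ℝ}
    (hpq : p.HolderConjugate q) :
    ∑ i, ∑ j, c i j * (a i * b j) ≤ (∑ i, a i ^ p) ^ (1 / p) * (∑ j, b j ^ q) ^ (1 / q) := by
  obtain ⟨hc0, hrow, hcol⟩ := mem_doublyStochastic_iff_sum.mp hc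
  have h := Real.inner_le_Lp_mul_Lq_of_nonneg Finset.univ hpq
    (f := fun x : n × n => c x.1 x.2 ^ (1 / p) * a x.1)
    (g := fun x : n × n => c x.1 x.2 ^ (1 / q) * b x.2)
    (fun x _ => mul_nonneg (Real.rpow_nonneg (hc0 _ _) _) (ha _))
    (fun x _ => mul_nonneg (Real.rpow_nonneg (hc0 _ _) _) (hb _))
  simp only [Fintype.sum_prod_type] at h
  have hpow : ∀ {r : ℝ}, 0 < r → ∀ i j {y : ℝ}, 0 ≤ y → (c i j ^ (1 / r) * y) ^ r = c i j * y ^ r :=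
    fun hr i j y hy => by
      rw [Real.mul_rpow (Real.rpow_nonneg (hc0 i j) _) hy, ← Real.rpow_mul (hc0 i j),
        one_div_mul_cancel hr.ne', Real.rpow_one]
  convert h using 3
  · rw [mul_mul_mul_comm, ← Real.rpow_add' (hc0 _ _) (by rw [hpq.one_div_add_one_div]; norm_num),
      hpq.one_div_add_one_div, div_one, Real.rpow_one]
  · simp_rw [hpow hpq.pos _ _ (ha _), ← Finset.sum_mul, hrow, one_mul]
  · simp_rw [hpow hpq.symm.pos _ _ (hb _)]
    rw [Finset.sum_comm]
    simp_rw [← Finset.sum_mul, hcol, one_mul]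

theorem rtr_mul_le_Lp_mul_Lq {Z X : Matrix n n ℂ} (hZ : Z.PosSemidef) (hX : X.PosSemidef)
    {p q : ℝ} (hpq : p.HolderConjugate q) :
    rtr (Z * X) ≤ rtr (hpow Z p) ^ (1 / p) * rtr (hpow X q) ^ (1 / q) := by
  set U : Matrix n n ℂ := (hZ.isHermitian.eigenvectorUnitary : Matrix n n ℂ)
  set V : Matrix n n ℂ := (hX.isHermitian.eigenvectorUnitary : Matrix n n ℂ)
  have hQ : star V * U ∈ unitary (Matrix n n ℂ) :=
    mul_mem (Unitary.star_mem (SetLike.coe_mem _)) (SetLike.coe_mem _)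
  have hZX : rtr (Z * X) = ∑ k, ∑ i, normSq ((star V * U) i k) *
      (hZ.isHermitian.eigenvalues k * hX.isHermitian.eigenvalues i) := by
    conv_lhs => rw [← cfc_id' ℝ Z, hZ.isHermitian.cfc_eq_mul_diagonal_mul, mul_assoc, mul_assoc,
      rtr_mul_comm, mul_assoc, rtr_diagonal_mul]
    refine Finset.sum_congr rfl fun k _ => ?_
    rw [star_eq_conjTranspose, re_conjTranspose_mul_mul_apply hX.isHermitian, Finset.mul_sum]
    exact Finset.sum_congr rfl fun i _ => by ring
  rw [hZX, rtr_hpow hZ.isHermitian, rtr_hpow hX.isHermitian]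
  exact sum_mul_mul_le_of_mem_doublyStochastic
    (transpose_mem_doublyStochastic_iff.mpr (normSq_mem_doublyStochastic hQ))
    hZ.eigenvalues_nonneg hX.eigenvalues_nonneg hpq

end holder

section sandwiched
variable {ρ σ A : Matrix n n ℂ} {α μ : ℝ}

/-- `Q̃_α(ρ‖σ)`, so that `D̃_α(ρ‖σ) = log (Q̃_α(ρ‖σ) / tr ρ) / (α - 1)`. -/
noncomputable def sandwichedTrace (α : ℝ) (ρ σ : Matrix n n ℂ) : ℝ :=
  rtr (hpow (hpow σ ((1 - α) / (2 * α)) * ρ * hpow σ ((1 - α) / (2 * α))) α)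

lemma sandwichedTrace_nonneg (hρ : ρ.PosSemidef) (hσ : σ.PosSemidef) (α : ℝ) :
    0 ≤ sandwichedTrace α ρ σ :=
  (posSemidef_hpow (posSemidef_hpow_mul_mul_hpow hρ hσ _) α).rtr_nonneg

lemma sandwichedTrace_pos (hρ : ρ.PosSemidef) (hρ0 : 0 < rtr ρ) (hσ : σ.PosDef) (α : ℝ) :
    0 < sandwichedTrace α ρ σ := by
  set c := (1 - α) / (2 * α)
  have hX := posSemidef_hpow_mul_mul_hpow hρ hσ.posSemidef c
  obtain ⟨i, hi⟩ : ∃ i, hX.isHermitian.eigenvalues i ≠ 0 := by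
    by_contra! h
    have h0 := hX.isHermitian.eigenvalues_eq_zero_iff.mp (funext h)
    rw [← hpow_neg_mul_mul_hpow_neg hσ ρ c, h0] at hρ0
    simp [rtr] at hρ0
  rw [sandwichedTrace, rtr_hpow hX.isHermitian]
  exact Finset.sum_pos' (fun j _ => Real.rpow_nonneg (hX.eigenvalues_nonneg j) α)
    ⟨i, Finset.mem_univ i, Real.rpow_pos_of_pos ((hX.eigenvalues_nonneg i).lt_of_ne' hi) α⟩

lemma rpow_sandwichedRenyi (hρ : ρ.PosSemidef) (hρ0 : 0 < rtr ρ) (hσ : σ.PosDef) (hα : 1 < α) :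
    ((2 : ℝ) ^ sandwichedRenyi α ρ σ) ^ (α - 1) = sandwichedTrace α ρ σ / rtr ρ := by
  have hα1 : α - 1 ≠ 0 := by linarith
  rw [← Real.rpow_mul zero_le_two, sandwichedRenyi, one_div_mul_eq_div, div_mul_cancel₀ _ hα1]
  exact Real.rpow_logb zero_lt_two (by norm_num) (div_pos (sandwichedTrace_pos hρ hρ0 hσ α) hρ0)

theorem rtr_mul_le_sandwichedTrace (hρ : ρ.PosSemidef) (hσ : σ.PosDef) (hA : A.PosSemidef)
    (hAμ : A ≤ μ • 1) (hα : 1 < α) :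
    rtr (A * ρ) ≤ (μ ^ (α.conjExponent - 1) * rtr (A * σ)) ^ (1 / α.conjExponent) *
      sandwichedTrace α ρ σ ^ (1 / α) := by
  set c := (1 - α) / (2 * α)
  set β := α.conjExponent
  have hβ : β.HolderConjugate α := (Real.HolderConjugate.conjExponent hα).symm
  set S := hpow σ (-c)
  set B := CFC.sqrt A
  have hS : Sᴴ = S := (posSemidef_hpow hσ.posSemidef _).isHermitian.eq
  have hB : Bᴴ = B := (CFC.sqrt_nonneg A).posSemidef.isHermitian.eq
  have hBB : B * B = A := CFC.sqrt_mul_sqrt_self A hA.nonneg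
  set X := hpow σ c * ρ * hpow σ c
  have hρX : ρ = S * X * S := (hpow_neg_mul_mul_hpow_neg hσ ρ c).symm
  have hAρ : rtr (A * ρ) = rtr ((S * B) * (S * B)ᴴ * X) := by
    rw [hρX, show A * (S * X * S) = A * S * X * S by simp only [mul_assoc], rtr_mul_comm, ← hBB,
      conjTranspose_mul, hS, hB]
    simp only [mul_assoc]
  have hα1 : α - 1 ≠ 0 := by linarith
  have hσβ : hpow (hpow σ (-2 * c)) β = σ := by
    rw [hpow_hpow hσ.posSemidef, show -2 * c * β = 1 by
      simp only [c, β, Real.conjExponent]; field_simp; ring, hpow_one hσ.isHermitian]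
  have hjensen : rtr (hpow ((S * B) * (S * B)ᴴ) β) ≤ μ ^ (β - 1) * rtr (A * σ) := by
    rw [rtr_hpow_mul_conjTranspose_self, conjTranspose_mul, hS,
      show Bᴴ * S * (S * B) = Bᴴ * hpow σ (-2 * c) * B by
        rw [mul_assoc, ← mul_assoc S, hpow_mul_hpow hσ, ← mul_assoc]; ring_nf]
    refine (rtr_hpow_conjTranspose_mul_mul_le (posSemidef_hpow hσ.posSemidef _)
      (by rwa [hB, hBB]) hβ.lt.le).trans_eq ?_
    rw [hσβ, hB, mul_assoc, rtr_mul_comm, mul_assoc, hBB, rtr_mul_comm]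
  rw [hAρ]
  refine (rtr_mul_le_Lp_mul_Lq (posSemidef_self_mul_conjTranspose _)
    (posSemidef_hpow_mul_mul_hpow hρ hσ.posSemidef c) hβ).trans ?_
  exact mul_le_mul_of_nonneg_right (Real.rpow_le_rpow
    (posSemidef_hpow (posSemidef_self_mul_conjTranspose _) β).rtr_nonneg hjensen hβ.one_div_nonneg)
    (Real.rpow_nonneg (sandwichedTrace_nonneg hρ hσ.posSemidef α) _)

theorem rtr_mul_rpow_le_sandwichedTrace_mul (hρ : ρ.PosSemidef) (hσ : σ.PosDef)
    (hA : A.PosSemidef) (hμ : 0 ≤ μ) (hAμ : A ≤ μ • 1) (hα : 1 < α) :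
    rtr (A * ρ) ^ α ≤ sandwichedTrace α ρ σ * μ * rtr (A * σ) ^ (α - 1) := by
  have hα0 : 0 < α := by linarith
  have hα1 : α - 1 ≠ 0 := by linarith
  have hQ := sandwichedTrace_nonneg hρ hσ.posSemidef α
  have hAσ := rtr_mul_nonneg hA hσ.posSemidef
  have hμs : 0 ≤ μ ^ (α.conjExponent - 1) * rtr (A * σ) :=
    mul_nonneg (Real.rpow_nonneg hμ _) hAσ
  calc rtr (A * ρ) ^ α
      ≤ ((μ ^ (α.conjExponent - 1) * rtr (A * σ)) ^ (1 / α.conjExponent) *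
          sandwichedTrace α ρ σ ^ (1 / α)) ^ α :=
        Real.rpow_le_rpow (rtr_mul_nonneg hA hρ) (rtr_mul_le_sandwichedTrace hρ hσ hA hAμ hα)
          hα0.le
    _ = sandwichedTrace α ρ σ * μ * rtr (A * σ) ^ (α - 1) := by
        rw [Real.mul_rpow (Real.rpow_nonneg hμs _) (Real.rpow_nonneg hQ _), ← Real.rpow_mul hμs,
          ← Real.rpow_mul hQ, one_div_mul_cancel hα0.ne', Real.rpow_one,
          Real.mul_rpow (Real.rpow_nonneg hμ _) hAσ, ← Real.rpow_mul hμ]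
        simp only [Real.conjExponent]
        field_simp
        rw [sub_sub_cancel, Real.rpow_one]
        ring

end sandwiched

section spectralProjection
open Set
variable {M : Matrix n n ℂ}

noncomputable def spectralProjIoi (μ : ℝ) (M : Matrix n n ℂ) : Matrix n n ℂ :=
  cfc (indicator (Ioi μ) 1) M

variable (μ : ℝ)

lemma isHermitian_spectralProjIoi : (spectralProjIoi μ M).IsHermitian :=
  IsSelfAdjoint.isHermitian (cfc_predicate _ M)

lemma spectralProjIoi_mul_self :
    spectralProjIoi μ M * spectralProjIoi μ M = spectralProjIoi μ M := by
  rw [spectralProjIoi, ← cfc_mul _ _ M (continuousOn_spectrum _ M) (continuousOn_spectrum _ M)]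
  exact cfc_congr fun x _ => by by_cases hx : x ∈ Ioi μ <;> simp [hx]

lemma posSemidef_spectralProjIoi : (spectralProjIoi μ M).PosSemidef :=
  (cfc_nonneg fun x _ => indicator_nonneg (fun _ _ => zero_le_one) x).posSemidef

lemma Matrix.PosSemidef.one_sub_spectralProjIoi_mul_mul {A : Matrix n n ℂ} (hA : A.PosSemidef) :
    ((1 - spectralProjIoi μ M) * A * (1 - spectralProjIoi μ M)).PosSemidef := by
  have h := hA.conjTranspose_mul_mul_same (1 - spectralProjIoi μ M)
  rwa [(isHermitian_one.sub (isHermitian_spectralProjIoi μ)).eq] at h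

lemma spectralProjIoi_le_one (hM : M.IsHermitian) : spectralProjIoi μ M ≤ (1 : ℝ) • 1 := by
  rw [one_smul, ← cfc_const_one ℝ M]
  exact cfc_mono (fun x _ => indicator_le_self' (fun _ _ => zero_le_one) x)
    (continuousOn_spectrum _ M) (continuousOn_spectrum _ M)

lemma smul_spectralProjIoi_le (hM : M.PosSemidef) : μ • spectralProjIoi μ M ≤ M := by
  rw [spectralProjIoi, ← cfc_smul μ _ M (continuousOn_spectrum _ M)]
  conv_rhs => rw [← cfc_id' ℝ M]
  refine cfc_mono (fun x hx => ?_) (continuousOn_spectrum _ M) (continuousOn_spectrum _ M)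
  by_cases hxμ : x ∈ Ioi μ
  · simpa [hxμ] using (le_of_lt hxμ)
  · simpa [hxμ] using hM.nonneg_of_mem_spectrum hx

lemma one_sub_spectralProjIoi_mul_mul (hM : M.IsHermitian) :
    (1 - spectralProjIoi μ M) * M * (1 - spectralProjIoi μ M) = cfc (indicator (Iic μ) id) M := by
  have hcompl : 1 - spectralProjIoi μ M = cfc (indicator (Iic μ) 1) M := by
    rw [spectralProjIoi, ← cfc_const_one ℝ M,
      ← cfc_sub _ _ M (continuousOn_spectrum _ M) (continuousOn_spectrum _ M)]
    refine cfc_congr fun x _ => ?_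
    rcases le_or_gt x μ with hx | hx
    · simp [indicator, hx, not_lt.mpr hx]
    · simp [indicator, hx, not_le.mpr hx]
  calc (1 - spectralProjIoi μ M) * M * (1 - spectralProjIoi μ M)
      = cfc (indicator (Iic μ) 1) M * cfc (fun x => x) M * cfc (indicator (Iic μ) 1) M := by
        rw [hcompl, cfc_id' ℝ M hM.isSelfAdjoint]
    _ = cfc (indicator (Iic μ) id) M := by
        rw [← cfc_mul _ _ M (continuousOn_spectrum _ M) (continuousOn_spectrum _ M),
          ← cfc_mul _ _ M (continuousOn_spectrum _ M) (continuousOn_spectrum _ M)]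
        exact cfc_congr fun x _ => by by_cases hx : x ≤ μ <;> simp [hx]

end spectralProjection

section bounds
variable {ρ σ M : Matrix n n ℂ} {μ α : ℝ}

lemma one_sub_spectralProjIoi_mul_mul_le_smul (hM : M.PosSemidef) (hμ : 0 ≤ μ) :
    (1 - spectralProjIoi μ M) * M * (1 - spectralProjIoi μ M) ≤ μ • 1 := by
  rw [one_sub_spectralProjIoi_mul_mul μ hM.isHermitian, ← Algebra.algebraMap_eq_smul_one,
    ← cfc_const μ M]
  refine cfc_mono (fun x _ => ?_) (continuousOn_spectrum _ M) (continuousOn_spectrum _ M)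
  by_cases hx : x ≤ μ <;> simp [Set.indicator, hx, hμ]

lemma one_sub_spectralProjIoi_mul_mul_le (hM : M.PosSemidef) :
    (1 - spectralProjIoi μ M) * M * (1 - spectralProjIoi μ M) ≤ M := by
  rw [one_sub_spectralProjIoi_mul_mul μ hM.isHermitian]
  conv_rhs => rw [← cfc_id' ℝ M]
  refine cfc_mono (fun x hx => ?_) (continuousOn_spectrum _ M) (continuousOn_spectrum _ M)
  by_cases hxμ : x ≤ μ <;> simp [Set.indicator, hxμ, hM.nonneg_of_mem_spectrum hx]

theorem rtr_spectralProjIoi_mul_rpow_le (hρ : ρ.PosSemidef) (hσ : σ.PosDef) (hM : M.PosSemidef)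
    (hMσ : rtr (M * σ) ≤ 1) (hμ : 0 < μ) (hα : 1 < α) :
    rtr (spectralProjIoi μ M * ρ) ^ α ≤ sandwichedTrace α ρ σ * (μ ^ (α - 1))⁻¹ := by
  set P := spectralProjIoi μ M
  have hPσ : rtr (P * σ) ≤ μ⁻¹ := by
    have h := (rtr_mul_le_rtr_mul (smul_spectralProjIoi_le μ hM) hσ.posSemidef).trans hMσ
    rw [smul_mul_assoc, rtr_smul] at h
    rwa [← one_div, le_div_iff₀' hμ]
  calc rtr (P * ρ) ^ α ≤ sandwichedTrace α ρ σ * 1 * rtr (P * σ) ^ (α - 1) :=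
        rtr_mul_rpow_le_sandwichedTrace_mul hρ hσ (posSemidef_spectralProjIoi μ) zero_le_one
          (spectralProjIoi_le_one μ hM.isHermitian) hα
    _ ≤ sandwichedTrace α ρ σ * 1 * μ⁻¹ ^ (α - 1) :=
        mul_le_mul_of_nonneg_left (Real.rpow_le_rpow
          (rtr_mul_nonneg (posSemidef_spectralProjIoi μ) hσ.posSemidef) hPσ (by linarith))
          (by simpa using sandwichedTrace_nonneg hρ hσ.posSemidef α)
    _ = sandwichedTrace α ρ σ * (μ ^ (α - 1))⁻¹ := by rw [Real.inv_rpow hμ.le, mul_one]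

theorem rtr_mul_one_sub_spectralProjIoi_rpow_le (hρ : ρ.PosSemidef) (hσ : σ.PosDef)
    (hM : M.PosSemidef) (hMσ : rtr (M * σ) ≤ 1) (hμ : 0 ≤ μ) (hα : 1 < α) :
    rtr (M * ((1 - spectralProjIoi μ M) * ρ * (1 - spectralProjIoi μ M))) ^ α ≤
      sandwichedTrace α ρ σ * μ := by
  set P := spectralProjIoi μ M
  set T := (1 - P) * M * (1 - P)
  have hT : T.PosSemidef := hM.one_sub_spectralProjIoi_mul_mul μ
  have hTσ : rtr (T * σ) ≤ 1 :=
    (rtr_mul_le_rtr_mul (one_sub_spectralProjIoi_mul_mul_le hM) hσ.posSemidef).trans hMσ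
  have hMT : rtr (M * ((1 - P) * ρ * (1 - P))) = rtr (T * ρ) := by
    rw [show M * ((1 - P) * ρ * (1 - P)) = M * (1 - P) * ρ * (1 - P) by simp only [mul_assoc],
      rtr_mul_comm]
    simp only [T, mul_assoc]
  calc rtr (M * ((1 - P) * ρ * (1 - P))) ^ α ≤ sandwichedTrace α ρ σ * μ * rtr (T * σ) ^ (α - 1) :=
        hMT ▸ rtr_mul_rpow_le_sandwichedTrace_mul hρ hσ hT hμ
          (one_sub_spectralProjIoi_mul_mul_le_smul hM hμ) hα
    _ ≤ sandwichedTrace α ρ σ * μ * 1 :=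
        mul_le_mul_of_nonneg_left (Real.rpow_le_one (rtr_mul_nonneg hT hσ.posSemidef) hTσ
          (by linarith)) (mul_nonneg (sandwichedTrace_nonneg hρ hσ.posSemidef α) hμ)
    _ = sandwichedTrace α ρ σ * μ := mul_one _

end bounds

end

lemma le_of_rpow_le_mul_rpow {x y t α : ℝ} (hx : 0 ≤ x) (hy : 0 ≤ y) (ht : t ≤ 1) (hα : 0 < α)
    (h : x ^ α ≤ t * y ^ α) : x ≤ y :=
  (Real.rpow_le_rpow_iff hx hy hα).mp (h.trans (mul_le_of_le_one_left (Real.rpow_nonneg hy α) ht))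

theorem renyi_projector_construction_general
    {n : Type*} [Fintype n] [DecidableEq n]
    (ρ σ M : Matrix n n ℂ) (hρ : ρ.PosSemidef) (hρ0 : 0 < rtr ρ) (hρ1 : rtr ρ ≤ 1)
    (hσ : σ.PosDef) (hM : M.PosSemidef) (hMσ : rtr (M * σ) ≤ 1)
    (α ε : ℝ) (hα : 1 < α) (hε : ε ∈ Set.Ioo (0 : ℝ) 1) :
    ∃ Pr : Matrix n n ℂ, Pr.IsHermitian ∧ Pr * Pr = Pr ∧
      rtr (Pr * ρ) ≤ ε ^ 2 ∧
      rtr (M * ((1 - Pr) * ρ * (1 - Pr)))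
        ≤ (2 : ℝ) ^ sandwichedRenyi α ρ σ * ε ^ (-2 / (α - 1)) := by
  have hε0 := hε.1
  have hα0 : 0 < α := by linarith
  have hα1 : α - 1 ≠ 0 := by linarith
  set R := (2 : ℝ) ^ sandwichedRenyi α ρ σ
  set κ := ε ^ (-2 / (α - 1))
  have hR : 0 < R := by positivity
  have hκ : 0 < κ := by positivity
  have hQR : sandwichedTrace α ρ σ = rtr ρ * R ^ (α - 1) := by
    rw [rpow_sandwichedRenyi hρ hρ0 hσ hα]
    field_simp
  have hμ : 0 < R * κ ^ α := by positivity
  refine ⟨spectralProjIoi (R * κ ^ α) M, isHermitian_spectralProjIoi _,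
    spectralProjIoi_mul_self _, ?_, ?_⟩
  · refine le_of_rpow_le_mul_rpow (rtr_mul_nonneg (posSemidef_spectralProjIoi _) hρ) (by positivity)
      hρ1 hα0 ((rtr_spectralProjIoi_mul_rpow_le hρ hσ hM hMσ hμ hα).trans_eq ?_)
    rw [hQR, Real.mul_rpow hR.le (by positivity), ← Real.rpow_mul hκ.le, ← Real.rpow_mul hε0.le,
      ← Real.rpow_natCast, ← Real.rpow_mul hε0.le]
    field_simp
    rw [← Real.rpow_add hε0, Nat.cast_ofNat, neg_add_cancel, Real.rpow_zero]
  · refine le_of_rpow_le_mul_rpow (rtr_mul_nonneg hM (hρ.one_sub_spectralProjIoi_mul_mul _))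
      (by positivity) hρ1 hα0
      ((rtr_mul_one_sub_spectralProjIoi_rpow_le hρ hσ hM hMσ hμ.le hα).trans_eq ?_)
    rw [hQR, Real.mul_rpow hR.le hκ.le, Real.rpow_sub_one hR.ne']
    field_simp

/-- The key projector construction in the proof of the smooth
max-divergence vs Rényi divergence bound. -/
theorem renyi_projector_construction
    {n : Type*} [Fintype n] [DecidableEq n] [Nonempty n]
    (ρ σ M : Matrix n n ℂ) (hρ : ρ.PosSemidef) (hρ0 : 0 < rtr ρ) (hρ1 : rtr ρ ≤ 1)
    (hσ : σ.PosDef) (hM : M.PosSemidef) (hMσ : rtr (M * σ) ≤ 1)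
    (α ε : ℝ) (hα : 1 < α) (hε : ε ∈ Set.Ioo (0 : ℝ) 1) :
    ∃ Pr : Matrix n n ℂ, Pr.IsHermitian ∧ Pr * Pr = Pr ∧
      rtr (Pr * ρ) ≤ ε ^ 2 ∧
      rtr (M * ((1 - Pr) * ρ * (1 - Pr)))
        ≤ (2 : ℝ) ^ sandwichedRenyi α ρ σ * ε ^ (-2 / (α - 1)) :=
  renyi_projector_construction_general ρ σ M hρ hρ0 hρ1 hσ hM hMσ α ε hα hε
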